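/- Define a_{λ,k,ℓ} = ∑_{2^λ ≤ n < 2^{λ+1}} ϑ̃(k,n)ϑ̃(ℓ,n), b_{λ,k,ℓ} = ∑_{2^λ ≤ n < 2^{λ+1}} ϑ̃(k,n)ϑ̃(ℓ,n−1), c_{λ,k,ℓ} = ∑_{2^λ ≤ n < 2^{λ+1}} ϑ̃(k,n−1)ϑ̃(ℓ,n). Then for λ ≥ 1 and k,ℓ ≥ 0: a_{λ,k,ℓ} = a_{λ−1,k,ℓ} + b_{λ−1,k,ℓ−2} + c_{λ−1,k−2,ℓ} + a_{λ−1,k−2,ℓ−2} + 4a_{λ−1,k−1,ℓ−1} + 4^{λ−1}δ_{k−1,λ}δ_{ℓ−1,λ} − 4^λ δ_{k−2,λ}δ_{ℓ−2,λ}. -/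

import Mathlib

/-- `s₂`, the binary sum-of-digits function. -/
def s2 (n : ℕ) : ℕ := (Nat.digits 2 n).sum

/-- `ϑ₂(j,n)`: the number of `t ∈ {0,…,n}` with `ν₂(C(n,t)) = j`. -/
def theta2 (j n : ℕ) : ℕ :=
  ((Finset.range (n + 1)).filter (fun t => padicValNat 2 (n.choose t) = j)).card

/-- `ϑ̃(k,n) = ϑ₂(k − s₂(n), n)` if `k ≥ s₂(n)` (and `n ≥ 0`), else `0`. -/
def tth (k n : ℤ) : ℕ :=
  if 0 ≤ n ∧ (s2 n.toNat : ℤ) ≤ k then theta2 (k - s2 n.toNat).toNat n.toNat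
  else 0

/-- `a_{λ,k,ℓ} = ∑_{2^λ ≤ n < 2^{λ+1}} ϑ̃(k,n) ϑ̃(ℓ,n)`. -/
noncomputable def aCoeff (lam : ℕ) (k l : ℤ) : ℕ :=
  ∑ n ∈ Finset.Ico (2 ^ lam) (2 ^ (lam + 1)), tth k n * tth l n

/-- `b_{λ,k,ℓ} = ∑_{2^λ ≤ n < 2^{λ+1}} ϑ̃(k,n) ϑ̃(ℓ,n−1)`. -/
noncomputable def bCoeff (lam : ℕ) (k l : ℤ) : ℕ :=
  ∑ n ∈ Finset.Ico (2 ^ lam) (2 ^ (lam + 1)), tth k n * tth l ((n : ℤ) - 1)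

/-- `c_{λ,k,ℓ} = ∑_{2^λ ≤ n < 2^{λ+1}} ϑ̃(k,n−1) ϑ̃(ℓ,n)`. -/
noncomputable def cCoeff (lam : ℕ) (k l : ℤ) : ℕ :=
  ∑ n ∈ Finset.Ico (2 ^ lam) (2 ^ (lam + 1)), tth k ((n : ℤ) - 1) * tth l n

lemma s2_zero : s2 0 = 0 := by simp [s2]
lemma s2_one : s2 1 = 1 := by simp [s2]

lemma s2_two_mul (n : ℕ) : s2 (2 * n) = s2 n := by
  rcases Nat.eq_zero_or_pos n with h | h
  · simp [h, s2]
  · unfold s2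
    rw [Nat.digits_def' (by norm_num) (by omega)]
    simp [Nat.mul_div_cancel_left _ (by norm_num : 0 < 2)]

lemma s2_two_mul_add_one (n : ℕ) : s2 (2 * n + 1) = s2 n + 1 := by
  unfold s2
  rw [Nat.digits_def' (by norm_num) (by omega)]
  have h1 : (2 * n + 1) % 2 = 1 := by omega
  have h2 : (2 * n + 1) / 2 = n := by omega
  rw [h1, h2]
  simp [Nat.add_comm]

lemma s2_le (n : ℕ) : s2 n ≤ n := Nat.digit_sum_le 2 n

lemma padicValNat_factorial_eq (n : ℕ) : padicValNat 2 (n.factorial) = n - s2 n := by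
  have := @sub_one_mul_padicValNat_factorial 2 ⟨Nat.prime_two⟩ n
  simpa [s2] using this

lemma s2_sub_add (n t : ℕ) (h : t ≤ n) : s2 n ≤ s2 t + s2 (n - t) := by
  have hd : t.factorial * (n - t).factorial ∣ n.factorial :=
    Nat.factorial_mul_factorial_dvd_factorial h
  have hdvd : (2:ℕ) ^ (padicValNat 2 t.factorial + padicValNat 2 (n - t).factorial) ∣ n.factorial := by
    rw [pow_add]
    exact dvd_trans (mul_dvd_mul pow_padicValNat_dvd pow_padicValNat_dvd) hd
  have hle := (@padicValNat_dvd_iff_le 2 ⟨Nat.prime_two⟩ n.factorial _ (Nat.factorial_ne_zero n)).mp hdvd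
  rw [padicValNat_factorial_eq, padicValNat_factorial_eq, padicValNat_factorial_eq] at hle
  have := s2_le t; have := s2_le (n - t); have := s2_le n
  omega

lemma padicValNat_choose_eq (n t : ℕ) (h : t ≤ n) :
    padicValNat 2 (n.choose t) + s2 n = s2 t + s2 (n - t) := by
  have := @sub_one_mul_padicValNat_choose_eq_sub_sum_digits 2 t n ⟨Nat.prime_two⟩ h
  have h2 := s2_sub_add n t h
  simp only [s2] at *
  omega

def T (k n : ℕ) : ℕ :=
  ((Finset.range (n + 1)).filter (fun t => s2 t + s2 (n - t) = k)).card

lemma T_eq_sum (k n : ℕ) :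
    T k n = ∑ t ∈ Finset.range (n + 1), if s2 t + s2 (n - t) = k then 1 else 0 := by
  rw [T, Finset.card_filter]

lemma tth_neg {k : ℤ} (n : ℤ) (hk : k < 0) : tth k n = 0 := by
  unfold tth
  rw [if_neg]
  rintro ⟨-, h⟩
  have : (0:ℤ) ≤ (s2 n.toNat : ℤ) := by positivity
  omega

lemma tth_eq_T (k n : ℕ) : tth (k : ℤ) (n : ℤ) = T k n := by
  unfold tth
  rcases le_or_gt (s2 n) k with h | h
  · rw [if_pos (by simp; exact_mod_cast h)]
    simp only [Int.toNat_natCast]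
    have h1 : ((k:ℤ) - s2 n).toNat = k - s2 n := by omega
    rw [h1]
    unfold theta2 T
    congr 1
    apply Finset.filter_congr
    intro t ht
    simp only [Finset.mem_range] at ht
    have ht' : t ≤ n := by omega
    have := padicValNat_choose_eq n t ht'
    constructor <;> intro hh <;> omega
  · rw [if_neg (by simp only [Int.toNat_natCast]; push_cast; omega)]
    symm
    unfold T
    rw [Finset.card_eq_zero, Finset.filter_eq_empty_iff]
    intro t ht
    simp only [Finset.mem_range] at ht
    have := padicValNat_choose_eq n t (by omega)
    omega

lemma sum_range_even_odd (f : ℕ → ℕ) (b : ℕ) :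
    ∑ t ∈ Finset.range (2 * b), f t =
      ∑ m ∈ Finset.range b, (f (2 * m) + f (2 * m + 1)) := by
  induction b with
  | zero => simp
  | succ b ih =>
    have : 2 * (b + 1) = (2 * b + 1) + 1 := by ring
    rw [this, Finset.sum_range_succ, Finset.sum_range_succ, ih, Finset.sum_range_succ]
    ring

lemma tth_two_mul (k n : ℕ) :
    tth (k : ℤ) ((2 * n : ℕ) : ℤ) = tth k n + tth ((k:ℤ) - 2) ((n:ℤ) - 1) := by
  rw [tth_eq_T, tth_eq_T, T_eq_sum, T_eq_sum]
  have hsplit : (2 * n : ℕ) + 1 = 2 * n + 1 := rfl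
  -- sum over range (2n+1) = sum over range (2n) + last
  rw [Finset.sum_range_succ, sum_range_even_odd]
  rw [Finset.sum_add_distrib]
  have he : ∑ m ∈ Finset.range n, (if s2 (2*m) + s2 (2*n - 2*m) = k then 1 else 0)
      + (if s2 (2*n) + s2 (2*n - 2*n) = k then 1 else 0)
      = ∑ t ∈ Finset.range (n+1), if s2 t + s2 (n - t) = k then 1 else 0 := by
    rw [Finset.sum_range_succ]
    congr 1
    · apply Finset.sum_congr rfl
      intro m hm
      simp only [Finset.mem_range] at hm
      have h1 : 2*n - 2*m = 2*(n - m) := by omega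
      rw [h1, s2_two_mul, s2_two_mul]
    · rw [Nat.sub_self, Nat.sub_self, s2_two_mul]
  have ho : ∑ m ∈ Finset.range n, (if s2 (2*m+1) + s2 (2*n - (2*m+1)) = k then 1 else 0)
      = tth ((k:ℤ) - 2) ((n:ℤ) - 1) := by
    rcases Nat.eq_zero_or_pos n with hn | hn
    · subst hn
      simp [tth]
    rcases lt_or_ge k 2 with hk | hk
    · rw [tth_neg _ (by omega), Finset.sum_eq_zero]
      intro m hm
      simp only [Finset.mem_range] at hm
      have h1 : 2*n - (2*m+1) = 2*(n-m-1)+1 := by omega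
      rw [h1, s2_two_mul_add_one, s2_two_mul_add_one, if_neg (by omega)]
    · obtain ⟨k', rfl⟩ : ∃ k', k = k' + 2 := ⟨k - 2, by omega⟩
      obtain ⟨n', rfl⟩ : ∃ n', n = n' + 1 := ⟨n - 1, by omega⟩
      have h2 : ((k' + 2 : ℕ) : ℤ) - 2 = (k' : ℕ) := by push_cast; ring
      have h3 : ((n' + 1 : ℕ) : ℤ) - 1 = (n' : ℕ) := by push_cast; ring
      rw [h2, h3, tth_eq_T, T_eq_sum]
      apply Finset.sum_congr rfl
      intro m hm
      simp only [Finset.mem_range] at hm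
      have h1 : 2*(n'+1) - (2*m+1) = 2*(n'-m)+1 := by omega
      rw [h1, s2_two_mul_add_one, s2_two_mul_add_one]
      have h4 : n' + 1 - 1 - m = n' - m := by omega
      congr 1
      simp only [eq_iff_iff]
      omega
  omega

lemma tth_two_mul_add_one (k : ℤ) (n : ℕ) :
    tth k ((2 * n + 1 : ℕ) : ℤ) = 2 * tth (k - 1) n := by
  rcases lt_or_ge k 0 with hk | hk
  · rw [tth_neg _ hk, tth_neg _ (by omega)]
  rcases lt_or_ge k 1 with hk1 | hk1
  · obtain rfl : k = 0 := by omega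
    have hL : tth ((0:ℕ):ℤ) ((2 * n + 1 : ℕ) : ℤ) = 0 := by
      rw [tth_eq_T, T_eq_sum, Finset.sum_eq_zero]
      intro t ht
      simp only [Finset.mem_range] at ht
      rcases Nat.even_or_odd t with ⟨u, hu⟩ | ⟨u, hu⟩
      · subst hu
        have h1 : 2*n + 1 - 2*u = 2*(n-u) + 1 := by omega
        rw [show u + u = 2*u by ring, h1, s2_two_mul, s2_two_mul_add_one, if_neg (by omega)]
      · subst hu
        have h1 : 2*n + 1 - (2*u + 1) = 2*(n-u) := by omega
        rw [h1, s2_two_mul_add_one, s2_two_mul, if_neg (by omega)]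
    rw [show ((0:ℤ) - 1) = -1 by ring, tth_neg _ (by norm_num : (-1:ℤ) < 0), mul_zero]
    simpa using hL
  obtain ⟨k', rfl⟩ : ∃ k' : ℕ, k = (k' : ℤ) + 1 := ⟨(k - 1).toNat, by omega⟩
  have h2 : (k' : ℤ) + 1 - 1 = ((k' : ℕ) : ℤ) := by ring
  rw [h2, show ((k':ℤ) + 1) = ((k' + 1 : ℕ) : ℤ) by push_cast; ring, tth_eq_T, tth_eq_T,
    T_eq_sum, T_eq_sum, show 2*n+1+1 = 2*(n+1) by ring, sum_range_even_odd,
    Finset.sum_add_distrib]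
  have he : ∑ m ∈ Finset.range (n+1), (if s2 (2*m) + s2 (2*n+1 - 2*m) = k'+1 then 1 else 0)
      = ∑ t ∈ Finset.range (n+1), if s2 t + s2 (n - t) = k' then 1 else 0 := by
    apply Finset.sum_congr rfl
    intro m hm
    simp only [Finset.mem_range] at hm
    have h1 : 2*n+1 - 2*m = 2*(n - m)+1 := by omega
    rw [h1, s2_two_mul, s2_two_mul_add_one]
    congr 1; simp only [eq_iff_iff]; omega
  have ho : ∑ m ∈ Finset.range (n+1), (if s2 (2*m+1) + s2 (2*n+1 - (2*m+1)) = k'+1 then 1 else 0)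
      = ∑ t ∈ Finset.range (n+1), if s2 t + s2 (n - t) = k' then 1 else 0 := by
    apply Finset.sum_congr rfl
    intro m hm
    simp only [Finset.mem_range] at hm
    have h1 : 2*n+1 - (2*m+1) = 2*(n - m) := by omega
    rw [h1, s2_two_mul_add_one, s2_two_mul]
    congr 1; simp only [eq_iff_iff]; omega
  omega

lemma tth_pow_sub_one (k : ℤ) (L : ℕ) :
    tth k (((2 ^ L - 1 : ℕ) : ℤ)) = if k = (L : ℤ) then 2 ^ L else 0 := by
  induction L generalizing k with
  | zero =>
    simp only [pow_zero, Nat.sub_self, Nat.cast_zero, Nat.cast_ofNat]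
    rcases lt_or_ge k 0 with hk | hk
    · rw [tth_neg _ hk, if_neg (by omega)]
    obtain ⟨k', rfl⟩ : ∃ k' : ℕ, k = (k' : ℤ) := ⟨k.toNat, by omega⟩
    rw [show ((0:ℤ)) = ((0:ℕ):ℤ) by norm_num, tth_eq_T, T_eq_sum, Finset.sum_range_one]
    have hs : s2 0 = 0 := by simp [s2]
    rw [Nat.sub_self, hs]
    split_ifs <;> first | rfl | omega
  | succ L ih =>
    have h1 : 2 ^ (L + 1) - 1 = 2 * (2 ^ L - 1) + 1 := by
      have : 1 ≤ 2 ^ L := Nat.one_le_two_pow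
      omega
    rw [h1, tth_two_mul_add_one, ih]
    rcases eq_or_ne k ((L:ℤ) + 1) with h | h
    · rw [if_pos (by push_cast; omega), if_pos (by omega)]
      ring
    · rw [if_neg (by push_cast; omega), if_neg (by omega), mul_zero]

lemma Ico_int_eq_map (A B : ℕ) :
    Finset.Ico (A : ℤ) (B : ℤ) = (Finset.Ico A B).map ⟨Nat.cast, Nat.cast_injective⟩ := by
  ext x
  simp only [Finset.mem_Ico, Finset.mem_map, Function.Embedding.coeFn_mk]
  constructor
  · rintro ⟨h1, h2⟩
    exact ⟨x.toNat, ⟨by omega, by omega⟩, by omega⟩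
  · rintro ⟨n, hn, rfl⟩
    omega

lemma coeff_sum_eq (F : ℤ → ℕ) (A B : ℕ) :
    ∑ n ∈ Finset.Ico (A : ℤ) (B : ℤ), F n = ∑ n ∈ Finset.Ico A B, F (n : ℤ) := by
  rw [Ico_int_eq_map, Finset.sum_map]
  rfl

lemma aCoeff_eq (lam : ℕ) (k l : ℤ) :
    aCoeff lam k l
      = ∑ n ∈ Finset.Ico ((2:ℕ) ^ lam) (2 ^ (lam + 1)), tth k (n : ℤ) * tth l (n : ℤ) := by
  unfold aCoeff
  rw [show ((2:ℤ) ^ lam) = (((2:ℕ) ^ lam : ℕ) : ℤ) by push_cast; ring,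
    show ((2:ℤ) ^ (lam+1)) = (((2:ℕ) ^ (lam+1) : ℕ) : ℤ) by push_cast; ring,
    coeff_sum_eq (fun n => tth k n * tth l n)]

lemma bCoeff_eq (lam : ℕ) (k l : ℤ) :
    bCoeff lam k l
      = ∑ n ∈ Finset.Ico ((2:ℕ) ^ lam) (2 ^ (lam + 1)), tth k (n : ℤ) * tth l ((n : ℤ) - 1) := by
  unfold bCoeff
  rw [show ((2:ℤ) ^ lam) = (((2:ℕ) ^ lam : ℕ) : ℤ) by push_cast; ring,
    show ((2:ℤ) ^ (lam+1)) = (((2:ℕ) ^ (lam+1) : ℕ) : ℤ) by push_cast; ring,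
    coeff_sum_eq (fun n => tth k n * tth l (n - 1))]

lemma cCoeff_eq (lam : ℕ) (k l : ℤ) :
    cCoeff lam k l
      = ∑ n ∈ Finset.Ico ((2:ℕ) ^ lam) (2 ^ (lam + 1)), tth k ((n : ℤ) - 1) * tth l (n : ℤ) := by
  unfold cCoeff
  rw [show ((2:ℤ) ^ lam) = (((2:ℕ) ^ lam : ℕ) : ℤ) by push_cast; ring,
    show ((2:ℤ) ^ (lam+1)) = (((2:ℕ) ^ (lam+1) : ℕ) : ℤ) by push_cast; ring,
    coeff_sum_eq (fun n => tth k (n - 1) * tth l n)]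

lemma sum_Ico_double (g : ℕ → ℕ) (A B : ℕ) :
    ∑ n ∈ Finset.Ico (2 * A) (2 * B), g n
      = ∑ m ∈ Finset.Ico A B, (g (2 * m) + g (2 * m + 1)) := by
  rcases le_or_gt A B with h | h
  · have h1 : ∑ n ∈ Finset.Ico 0 (2*A), g n + ∑ n ∈ Finset.Ico (2*A) (2*B), g n
        = ∑ n ∈ Finset.Ico 0 (2*B), g n :=
      Finset.sum_Ico_consecutive _ (by omega) (by omega)
    have h2 : ∑ m ∈ Finset.Ico 0 A, (g (2*m) + g (2*m+1))
        + ∑ m ∈ Finset.Ico A B, (g (2*m) + g (2*m+1))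
        = ∑ m ∈ Finset.Ico 0 B, (g (2*m) + g (2*m+1)) :=
      Finset.sum_Ico_consecutive _ (by omega) h
    have h3 : ∑ n ∈ Finset.Ico 0 (2*A), g n = ∑ m ∈ Finset.Ico 0 A, (g (2*m) + g (2*m+1)) := by
      rw [← Finset.range_eq_Ico, ← Finset.range_eq_Ico]; exact sum_range_even_odd g A
    have h4 : ∑ n ∈ Finset.Ico 0 (2*B), g n = ∑ m ∈ Finset.Ico 0 B, (g (2*m) + g (2*m+1)) := by
      rw [← Finset.range_eq_Ico, ← Finset.range_eq_Ico]; exact sum_range_even_odd g B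
    omega
  · rw [Finset.Ico_eq_empty (by omega), Finset.Ico_eq_empty (by omega)]
    simp

lemma sum_Ico_pred (g : ℕ → ℕ) (A B : ℕ) (hA : 1 ≤ A) :
    ∑ m ∈ Finset.Ico A B, g (m - 1) = ∑ m ∈ Finset.Ico (A - 1) (B - 1), g m := by
  rcases le_or_gt A B with h | h
  · rw [Finset.sum_Ico_eq_sum_range, Finset.sum_Ico_eq_sum_range,
      show B - 1 - (A - 1) = B - A by omega]
    apply Finset.sum_congr rfl
    intro i hi
    congr 1
    omega
  · rw [Finset.Ico_eq_empty (by omega), Finset.Ico_eq_empty (by omega)]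
    simp

theorem aCoeff_recurrence (lam : ℕ) (hlam : 1 ≤ lam) (k l : ℕ) :
    (aCoeff lam k l : ℤ) =
      aCoeff (lam - 1) k l + bCoeff (lam - 1) k ((l : ℤ) - 2)
        + cCoeff (lam - 1) ((k : ℤ) - 2) l
        + aCoeff (lam - 1) ((k : ℤ) - 2) ((l : ℤ) - 2)
        + 4 * aCoeff (lam - 1) ((k : ℤ) - 1) ((l : ℤ) - 1)
        + 4 ^ (lam - 1) * (if (k : ℤ) - 1 = lam then 1 else 0)
            * (if (l : ℤ) - 1 = lam then 1 else 0)
        - 4 ^ lam * (if (k : ℤ) - 2 = lam then 1 else 0)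
            * (if (l : ℤ) - 2 = lam then 1 else 0) := by
  obtain ⟨L, rfl⟩ : ∃ L, lam = L + 1 := ⟨lam - 1, by omega⟩
  simp only [Nat.add_sub_cancel]
  have hpow : 1 ≤ (2:ℕ) ^ L := Nat.one_le_two_pow
  have hpow2 : (2:ℕ) ^ L < 2 ^ (L+1) := by
    rw [pow_succ]; omega
  have key : aCoeff (L+1) (k:ℤ) (l:ℤ)
      + tth ((k:ℤ)-2) (((2^(L+1) - 1 : ℕ)) : ℤ) * tth ((l:ℤ)-2) (((2^(L+1) - 1 : ℕ)) : ℤ)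
      = aCoeff L k l + bCoeff L k ((l:ℤ)-2) + cCoeff L ((k:ℤ)-2) l
        + aCoeff L ((k:ℤ)-2) ((l:ℤ)-2) + 4 * aCoeff L ((k:ℤ)-1) ((l:ℤ)-1)
        + tth ((k:ℤ)-2) (((2^L - 1 : ℕ)) : ℤ) * tth ((l:ℤ)-2) (((2^L - 1 : ℕ)) : ℤ) := by
    have hsplit := sum_Ico_double (fun n => tth (k:ℤ) (n:ℤ) * tth (l:ℤ) (n:ℤ)) (2^L) (2^(L+1))
    rw [show 2*2^(L+1) = 2^(L+1+1) by ring, show 2*2^L = 2^(L+1) by ring] at hsplit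
    have hterm : ∀ m ∈ Finset.Ico ((2:ℕ)^L) (2^(L+1)),
        tth (k:ℤ) ((2*m : ℕ):ℤ) * tth (l:ℤ) ((2*m : ℕ):ℤ)
          + tth (k:ℤ) ((2*m+1 : ℕ):ℤ) * tth (l:ℤ) ((2*m+1 : ℕ):ℤ)
        = tth (k:ℤ) (m:ℤ) * tth (l:ℤ) (m:ℤ)
          + tth (k:ℤ) (m:ℤ) * tth ((l:ℤ)-2) ((m:ℤ)-1)
          + tth ((k:ℤ)-2) ((m:ℤ)-1) * tth (l:ℤ) (m:ℤ)
          + tth ((k:ℤ)-2) ((m:ℤ)-1) * tth ((l:ℤ)-2) ((m:ℤ)-1)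
          + 4 * (tth ((k:ℤ)-1) (m:ℤ) * tth ((l:ℤ)-1) (m:ℤ)) := by
      intro m hm
      rw [tth_two_mul, tth_two_mul, tth_two_mul_add_one, tth_two_mul_add_one]
      ring
    have hsum : aCoeff (L+1) (k:ℤ) (l:ℤ)
        = aCoeff L k l + bCoeff L k ((l:ℤ)-2) + cCoeff L ((k:ℤ)-2) l
          + (∑ m ∈ Finset.Ico ((2:ℕ)^L) (2^(L+1)),
              tth ((k:ℤ)-2) ((m:ℤ)-1) * tth ((l:ℤ)-2) ((m:ℤ)-1))
          + 4 * aCoeff L ((k:ℤ)-1) ((l:ℤ)-1) := by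
      rw [aCoeff_eq (L+1), hsplit, Finset.sum_congr rfl hterm]
      simp only [Finset.sum_add_distrib, ← Finset.mul_sum]
      rw [aCoeff_eq L (k:ℤ) (l:ℤ), bCoeff_eq, cCoeff_eq, aCoeff_eq L ((k:ℤ)-1) ((l:ℤ)-1)]
    have hshift : ∀ m ∈ Finset.Ico ((2:ℕ)^L) (2^(L+1)),
        tth ((k:ℤ)-2) ((m:ℤ)-1) * tth ((l:ℤ)-2) ((m:ℤ)-1)
        = tth ((k:ℤ)-2) ((m - 1 : ℕ):ℤ) * tth ((l:ℤ)-2) ((m - 1 : ℕ):ℤ) := by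
      intro m hm
      simp only [Finset.mem_Ico] at hm
      have he : ((m:ℤ)-1) = ((m-1 : ℕ):ℤ) := by omega
      rw [he]
    have hS : (∑ m ∈ Finset.Ico ((2:ℕ)^L) (2^(L+1)),
          tth ((k:ℤ)-2) ((m:ℤ)-1) * tth ((l:ℤ)-2) ((m:ℤ)-1))
        + tth ((k:ℤ)-2) (((2^(L+1) - 1 : ℕ)) : ℤ) * tth ((l:ℤ)-2) (((2^(L+1) - 1 : ℕ)) : ℤ)
        = aCoeff L ((k:ℤ)-2) ((l:ℤ)-2)
          + tth ((k:ℤ)-2) (((2^L - 1 : ℕ)) : ℤ) * tth ((l:ℤ)-2) (((2^L - 1 : ℕ)) : ℤ) := by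
      rw [Finset.sum_congr rfl hshift,
        sum_Ico_pred (fun j : ℕ => tth ((k:ℤ)-2) (j:ℤ) * tth ((l:ℤ)-2) (j:ℤ)) _ _ hpow]
      have e1 : ∑ j ∈ Finset.Ico ((2:ℕ)^L - 1) (2^(L+1) - 1),
            tth ((k:ℤ)-2) (j:ℤ) * tth ((l:ℤ)-2) (j:ℤ)
          = tth ((k:ℤ)-2) (((2:ℕ)^L - 1 : ℕ):ℤ) * tth ((l:ℤ)-2) (((2:ℕ)^L - 1 : ℕ):ℤ)
            + ∑ j ∈ Finset.Ico ((2:ℕ)^L) (2^(L+1) - 1),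
                tth ((k:ℤ)-2) (j:ℤ) * tth ((l:ℤ)-2) (j:ℤ) := by
        rw [Finset.sum_eq_sum_Ico_succ_bot (by omega)
          (fun j : ℕ => tth ((k:ℤ)-2) (j:ℤ) * tth ((l:ℤ)-2) (j:ℤ)),
          show (2:ℕ)^L - 1 + 1 = 2^L by omega]
      have e2 : aCoeff L ((k:ℤ)-2) ((l:ℤ)-2)
          = (∑ j ∈ Finset.Ico ((2:ℕ)^L) (2^(L+1) - 1),
              tth ((k:ℤ)-2) (j:ℤ) * tth ((l:ℤ)-2) (j:ℤ))
            + tth ((k:ℤ)-2) ((2^(L+1) - 1 : ℕ):ℤ) * tth ((l:ℤ)-2) ((2^(L+1) - 1 : ℕ):ℤ) := by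
        conv_lhs => rw [aCoeff_eq, show (2:ℕ)^(L+1) = (2^(L+1) - 1) + 1 by omega]
        rw [Finset.sum_Ico_succ_top (by omega)]
      rw [e1, e2]
      ring
    omega
  -- rewrite the boundary terms as deltas, still in ℕ
  have hb2 : tth ((k:ℤ)-2) (((2^(L+1) - 1 : ℕ)) : ℤ) * tth ((l:ℤ)-2) (((2^(L+1) - 1 : ℕ)) : ℤ)
      = 4^(L+1) * (if (k:ℤ)-2 = ((L+1:ℕ):ℤ) then 1 else 0)
        * (if (l:ℤ)-2 = ((L+1:ℕ):ℤ) then 1 else 0) := by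
    rw [tth_pow_sub_one, tth_pow_sub_one]
    split_ifs <;> simp
    rw [show (4:ℕ) = 2*2 by norm_num, mul_pow]
  have hb1 : tth ((k:ℤ)-2) (((2^L - 1 : ℕ)) : ℤ) * tth ((l:ℤ)-2) (((2^L - 1 : ℕ)) : ℤ)
      = 4^L * (if (k:ℤ)-1 = ((L+1:ℕ):ℤ) then 1 else 0)
        * (if (l:ℤ)-1 = ((L+1:ℕ):ℤ) then 1 else 0) := by
    rw [tth_pow_sub_one, tth_pow_sub_one]
    have hck : ((k:ℤ)-2 = (L:ℤ)) ↔ ((k:ℤ)-1 = ((L+1:ℕ):ℤ)) := by push_cast; omega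
    have hcl : ((l:ℤ)-2 = (L:ℤ)) ↔ ((l:ℤ)-1 = ((L+1:ℕ):ℤ)) := by push_cast; omega
    rw [if_congr hck rfl rfl, if_congr hcl rfl rfl]
    split_ifs <;> simp
    rw [show (4:ℕ) = 2*2 by norm_num, mul_pow]
  rw [hb2, hb1] at key
  have keyZ := congrArg (fun x : ℕ => (x:ℤ)) key
  push_cast at keyZ ⊢
  linarith [keyZ]
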